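/- Let g be a nondegenerate symmetric bilinear form on a 4-dimensional real vector space V, let G and T be symmetric bilinear forms on V, and let Λ, κ be real numbers. Then the expanded Einstein equation (G∘g) + Λ(g∘g) = κ(T∘g) holds (as an equality of 4-linear forms on V) if and only if the Einstein equation G + Λg = κT holds (as an equality of bilinear forms on V). -/

import Mathlib

/-- The Kulkarni–Nomizu product of two bilinear forms `h` and `k`:
`(h∘k)(x,y,z,w) = h(x,z)k(y,w) − h(x,w)k(y,z) + h(y,w)k(x,z) − h(y,z)k(x,w)`. -/
def kulkarniNomizu {V : Type*} [AddCommGroup V] [Module ℝ V]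
    (h k : V →ₗ[ℝ] V →ₗ[ℝ] ℝ) (x y z w : V) : ℝ :=
  h x z * k y w - h x w * k y z + h y w * k x z - h y z * k x w

/-!
Moving everything to one side, the expanded equation says `B ∘ g = 0` for
`B = G + Λ g - κ T`, so it suffices that `B ↦ B ∘ g` is injective in dimension `n ≥ 3`.
Contracting `B ∘ g = 0` with `g` in the second and fourth slots (along a basis and its
`g`-dual basis) gives `(n - 2) B + (tr_g B) g = 0`; contracting once more gives
`(2n - 2) tr_g B = 0`, so `tr_g B = 0` and then `B = 0`.
-/

open Module
open LinearMap (BilinForm)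

namespace LinearMap.BilinForm

variable {K V ι : Type*} [Field K] [AddCommGroup V] [Module K V] [Fintype ι] [DecidableEq ι]
  {B : BilinForm K V}

theorem sum_apply_mul_apply_dualBasis (hB : B.Nondegenerate) (b : Basis ι K V)
    (f : Dual K V) (x : V) :
    ∑ i, B x (b i) * f (B.dualBasis hB b i) = f x := by
  conv_rhs => rw [← (B.dualBasis hB b).sum_repr x]
  simp [dualBasis_repr_apply]

theorem sum_apply_basis_dualBasis (hB : B.Nondegenerate) (hBs : B.IsSymm) (b : Basis ι K V) :
    ∑ i, B (b i) (B.dualBasis hB b i) = Fintype.card ι := by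
  simp [apply_dualBasis_right hB hBs]

end LinearMap.BilinForm

section KulkarniNomizu

open LinearMap.BilinForm

variable {V : Type*} [AddCommGroup V] [Module ℝ V]

@[simp]
theorem kulkarniNomizu_add_left (h h' k : V →ₗ[ℝ] V →ₗ[ℝ] ℝ) (x y z w : V) :
    kulkarniNomizu (h + h') k x y z w
      = kulkarniNomizu h k x y z w + kulkarniNomizu h' k x y z w := by
  simp only [kulkarniNomizu, LinearMap.add_apply]
  ring

@[simp]
theorem kulkarniNomizu_sub_left (h h' k : V →ₗ[ℝ] V →ₗ[ℝ] ℝ) (x y z w : V) :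
    kulkarniNomizu (h - h') k x y z w
      = kulkarniNomizu h k x y z w - kulkarniNomizu h' k x y z w := by
  simp only [kulkarniNomizu, LinearMap.sub_apply]
  ring

@[simp]
theorem kulkarniNomizu_smul_left (c : ℝ) (h k : V →ₗ[ℝ] V →ₗ[ℝ] ℝ) (x y z w : V) :
    kulkarniNomizu (c • h) k x y z w = c * kulkarniNomizu h k x y z w := by
  simp only [kulkarniNomizu, LinearMap.smul_apply, smul_eq_mul]
  ring

variable {ι : Type*} [Fintype ι] [DecidableEq ι] {g : BilinForm ℝ V}

theorem sum_kulkarniNomizu_basis_dualBasis (hg : g.Nondegenerate) (hgs : g.IsSymm)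
    (b : Basis ι ℝ V) (B : BilinForm ℝ V) (x z : V) :
    ∑ i, kulkarniNomizu B g x (b i) z (g.dualBasis hg b i)
      = (Fintype.card ι - 2) * B x z + (∑ i, B (b i) (g.dualBasis hg b i)) * g x z := by
  set d := g.dualBasis hg b
  have h₁ : ∑ i, B x (d i) * g (b i) z = B x z := by
    simpa [hgs.eq z, mul_comm] using sum_apply_mul_apply_dualBasis hg b (B x) z
  have h₂ : ∑ i, B (b i) z * g x (d i) = B x z := by
    simpa [d, dualBasis_dualBasis hg hgs, mul_comm] using
      sum_apply_mul_apply_dualBasis hg d (B.flip z) x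
  simp only [kulkarniNomizu, Finset.sum_sub_distrib, Finset.sum_add_distrib, h₁, h₂,
    ← Finset.mul_sum, ← Finset.sum_mul]
  rw [sum_apply_basis_dualBasis hg hgs b]
  ring

theorem kulkarniNomizu_eq_zero_iff [FiniteDimensional ℝ V] (hn : 2 < finrank ℝ V)
    (hg : g.Nondegenerate) (hgs : g.IsSymm) (B : BilinForm ℝ V) :
    (∀ x y z w, kulkarniNomizu B g x y z w = 0) ↔ B = 0 := by
  refine ⟨fun h ↦ ?_, fun h ↦ by simp [h, kulkarniNomizu]⟩
  set b := finBasis ℝ V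
  set d := g.dualBasis hg b
  have hn' : (2 : ℝ) < finrank ℝ V := by exact_mod_cast hn
  have contract (x z : V) :
      ((finrank ℝ V : ℝ) - 2) * B x z + (∑ i, B (b i) (d i)) * g x z = 0 := by
    simpa [h] using (sum_kulkarniNomizu_basis_dualBasis hg hgs b B x z).symm
  have htrace : ∑ i, B (b i) (d i) = 0 := by
    have := Finset.sum_eq_zero (s := Finset.univ) fun i _ ↦ contract (b i) (d i)
    rw [Finset.sum_add_distrib, ← Finset.mul_sum, ← Finset.mul_sum,
      sum_apply_basis_dualBasis hg hgs b, Fintype.card_fin] at this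
    nlinarith
  ext x z
  simpa [htrace, (by linarith : (finrank ℝ V : ℝ) - 2 ≠ 0)] using contract x z

end KulkarniNomizu

theorem expanded_einstein_iff_einstein_general {V : Type*} [AddCommGroup V] [Module ℝ V]
    [FiniteDimensional ℝ V] (hdim : Module.finrank ℝ V = 4)
    (g G T : V →ₗ[ℝ] V →ₗ[ℝ] ℝ) (Λ κ : ℝ)
    (hgsymm : ∀ x y, g x y = g y x)
    (hgnd : ∀ x : V, (∀ y : V, g x y = 0) → x = 0) :
    (∀ x y z w : V,
        kulkarniNomizu G g x y z w + Λ * kulkarniNomizu g g x y z w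
          = κ * kulkarniNomizu T g x y z w)
      ↔ (∀ x y : V, G x y + Λ * g x y = κ * T x y) := by
  have hg : BilinForm.Nondegenerate g :=
    ⟨hgnd, fun y hy ↦ hgnd y fun x ↦ hgsymm y x ▸ hy x⟩
  have key := kulkarniNomizu_eq_zero_iff (by omega) hg ⟨hgsymm⟩ (G + Λ • g - κ • T)
  simpa [LinearMap.ext_iff₂, sub_eq_zero] using key

/-- For a nondegenerate symmetric bilinear form `g` on a 4-dimensional real
vector space, symmetric bilinear forms `G`, `T`, and reals `Λ`, `κ`, the
expanded Einstein equation `(G∘g) + Λ(g∘g) = κ(T∘g)` holds if and only if the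
Einstein equation `G + Λg = κT` holds. -/
theorem expanded_einstein_iff_einstein {V : Type*} [AddCommGroup V] [Module ℝ V]
    [FiniteDimensional ℝ V] (hdim : Module.finrank ℝ V = 4)
    (g G T : V →ₗ[ℝ] V →ₗ[ℝ] ℝ) (Λ κ : ℝ)
    (hgsymm : ∀ x y, g x y = g y x)
    (hgnd : ∀ x : V, (∀ y : V, g x y = 0) → x = 0)
    (hGsymm : ∀ x y, G x y = G y x) (hTsymm : ∀ x y, T x y = T y x) :
    (∀ x y z w : V,
        kulkarniNomizu G g x y z w + Λ * kulkarniNomizu g g x y z w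
          = κ * kulkarniNomizu T g x y z w)
      ↔ (∀ x y : V, G x y + Λ * g x y = κ * T x y) :=
  expanded_einstein_iff_einstein_general hdim g G T Λ κ hgsymm hgnd
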